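/- Let D be a distribution on {0,1}^n, x a string with p_x = Pr[D = x] ≥ 2^{-k}, and H a pairwise independent hash family from {0,1}^n to {0,1}^k. Then E_{h∼H}[Pr_{x'∼D}[x' = x | h(x') = h(x)]] ≥ p_x/(p_x + 2^{-k}) ≥ 1/2. -/
import Mathlib


open Classical in
/-- For a pairwise independent hash family from `{0,1}^n` to `{0,1}^k` and any
distribution `D` on `{0,1}^n` with `p_x ≥ 2^{-k}`:
`E_{h∼H}[Pr_{x'∼D}[x' = x | h(x') = h(x)]] ≥ p_x/(p_x + 2^{-k}) ≥ 1/2`. -/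
theorem stmt11 {n k : ℕ} {ℋ : Type*} [Fintype ℋ] [Nonempty ℋ]
    (hash : ℋ → (Fin n → Bool) → (Fin k → Bool))
    (hpair : ∀ a b : Fin n → Bool, a ≠ b → ∀ u v : Fin k → Bool,
      ((Finset.univ.filter (fun h : ℋ => hash h a = u ∧ hash h b = v)).card : ℝ)
          / (Fintype.card ℋ : ℝ)
        = (2 : ℝ) ^ (-(2 * (k : ℝ))))
    (D : (Fin n → Bool) → ℝ) (hD0 : ∀ y, 0 ≤ D y) (hD1 : ∑ y, D y = 1)
    (x : Fin n → Bool) (hk : (2 : ℝ) ^ (-(k : ℝ)) ≤ D x) :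
    D x / (D x + (2 : ℝ) ^ (-(k : ℝ)))
      ≤ (1 / (Fintype.card ℋ : ℝ)) * ∑ h : ℋ,
          D x / (∑ y ∈ Finset.univ.filter (fun y => hash h y = hash h x), D y)
    ∧ (1 : ℝ) / 2 ≤ D x / (D x + (2 : ℝ) ^ (-(k : ℝ))) := by
  classical
  set N : ℝ := (Fintype.card ℋ : ℝ) with hN
  have hNpos : (0 : ℝ) < N := by
    rw [hN]
    exact_mod_cast Fintype.card_pos
  have hepos : (0 : ℝ) < (2 : ℝ) ^ (-(k : ℝ)) := Real.rpow_pos_of_pos (by norm_num) _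
  have hxpos : 0 < D x := lt_of_lt_of_le hepos hk
  set S : ℋ → ℝ := fun h => ∑ y ∈ Finset.univ.filter (fun y => hash h y = hash h x), D y
    with hSdef
  have hSx : ∀ h, D x ≤ S h := by
    intro h
    exact Finset.single_le_sum (fun y _ => hD0 y) (by simp)
  have hSpos : ∀ h, 0 < S h := fun h => lt_of_lt_of_le hxpos (hSx h)
  -- collision count for y ≠ x
  have hcoll : ∀ y, y ≠ x →
      ((Finset.univ.filter (fun h : ℋ => hash h y = hash h x)).card : ℝ)
        = N * (2 : ℝ) ^ (-(k : ℝ)) := by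
    intro y hy
    have hcard : (Finset.univ.filter (fun h : ℋ => hash h y = hash h x)).card
        = ∑ u : Fin k → Bool,
            (Finset.univ.filter (fun h : ℋ => hash h y = u ∧ hash h x = u)).card := by
      rw [Finset.card_eq_sum_card_fiberwise
        (f := fun h : ℋ => hash h x) (t := Finset.univ) (fun _ _ => Finset.mem_univ _)]
      refine Finset.sum_congr rfl fun u _ => ?_
      congr 1
      rw [Finset.filter_filter]
      apply Finset.filter_congr
      intro h _
      constructor
      · rintro ⟨h1, h2⟩; exact ⟨h2 ▸ h1, h2⟩
      · rintro ⟨h1, h2⟩; exact ⟨h2 ▸ h1, h2⟩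
    have hone : ∀ u : Fin k → Bool,
        ((Finset.univ.filter (fun h : ℋ => hash h y = u ∧ hash h x = u)).card : ℝ)
          = (2 : ℝ) ^ (-(2 * (k : ℝ))) * N := by
      intro u
      have h1 := hpair y x hy u u
      rw [div_eq_iff (ne_of_gt hNpos)] at h1
      exact h1
    have hcardfun : (Fintype.card (Fin k → Bool) : ℝ) = (2 : ℝ) ^ (k : ℝ) := by
      have h2 : Fintype.card (Fin k → Bool) = 2 ^ k := by simp
      rw [h2]
      push_cast
      exact (Real.rpow_natCast 2 k).symm
    calc ((Finset.univ.filter (fun h : ℋ => hash h y = hash h x)).card : ℝ)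
        = ∑ u : Fin k → Bool, ((Finset.univ.filter
            (fun h : ℋ => hash h y = u ∧ hash h x = u)).card : ℝ) := by
          rw [hcard]; push_cast; ring
      _ = (Fintype.card (Fin k → Bool) : ℝ) * ((2 : ℝ) ^ (-(2 * (k : ℝ))) * N) := by
          rw [Finset.sum_congr rfl (fun u _ => hone u), Finset.sum_const,
            Finset.card_univ, nsmul_eq_mul]
      _ = N * (2 : ℝ) ^ (-(k : ℝ)) := by
          rw [hcardfun, ← mul_assoc, ← Real.rpow_add (by norm_num : (0:ℝ) < 2),
            show (k : ℝ) + -(2 * (k : ℝ)) = -(k : ℝ) by ring, mul_comm]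
  -- sum of S over h
  have hsumS : ∑ h : ℋ, S h ≤ N * (D x + (2 : ℝ) ^ (-(k : ℝ))) := by
    have hswap : ∑ h : ℋ, S h = ∑ y : Fin n → Bool,
        ((Finset.univ.filter (fun h : ℋ => hash h y = hash h x)).card : ℝ) * D y := by
      simp only [hSdef, Finset.sum_filter]
      rw [Finset.sum_comm]
      refine Finset.sum_congr rfl fun y _ => ?_
      rw [← Finset.sum_filter, Finset.sum_const, nsmul_eq_mul]
    rw [hswap, ← Finset.sum_erase_add _ _ (Finset.mem_univ x)]
    have hxterm : ((Finset.univ.filter (fun h : ℋ => hash h x = hash h x)).card : ℝ) * D x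
        = N * D x := by
      simp [hN]
    rw [hxterm]
    have hrest : ∑ y ∈ Finset.univ.erase x,
        ((Finset.univ.filter (fun h : ℋ => hash h y = hash h x)).card : ℝ) * D y
        ≤ N * (2 : ℝ) ^ (-(k : ℝ)) := by
      have h1 : ∑ y ∈ Finset.univ.erase x,
          ((Finset.univ.filter (fun h : ℋ => hash h y = hash h x)).card : ℝ) * D y
          = N * (2 : ℝ) ^ (-(k : ℝ)) * ∑ y ∈ Finset.univ.erase x, D y := by
        rw [Finset.mul_sum]
        refine Finset.sum_congr rfl fun y hy => ?_
        rw [hcoll y (Finset.ne_of_mem_erase hy)]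
      rw [h1]
      have h2 : ∑ y ∈ Finset.univ.erase x, D y ≤ 1 := by
        have h3 := Finset.sum_erase_add Finset.univ D (Finset.mem_univ x)
        have hx0 := hD0 x
        nlinarith [hD1]
      nlinarith [mul_pos hNpos hepos]
    nlinarith
  -- Cauchy-Schwarz: N^2 ≤ (∑ S h) * (∑ 1/S h)
  have hCS : N ^ 2 ≤ (∑ h : ℋ, S h) * (∑ h : ℋ, 1 / S h) := by
    have h1 := Finset.sum_mul_sq_le_sq_mul_sq Finset.univ
      (fun h : ℋ => Real.sqrt (S h)) (fun h : ℋ => 1 / Real.sqrt (S h))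
    have h2 : ∀ h : ℋ, Real.sqrt (S h) * (1 / Real.sqrt (S h)) = 1 := by
      intro h
      rw [mul_one_div, div_self (ne_of_gt (Real.sqrt_pos.mpr (hSpos h)))]
    have h3 : ∀ h : ℋ, Real.sqrt (S h) ^ 2 = S h := fun h => Real.sq_sqrt (hSpos h).le
    have h4 : ∀ h : ℋ, (1 / Real.sqrt (S h)) ^ 2 = 1 / S h := by
      intro h
      rw [div_pow, one_pow, h3]
    rw [Finset.sum_congr rfl (fun h _ => h2 h), Finset.sum_congr rfl (fun h _ => h3 h),
      Finset.sum_congr rfl (fun h _ => h4 h), Finset.sum_const, Finset.card_univ,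
      nsmul_eq_mul, mul_one] at h1
    simpa [hN] using h1
  have hTpos : 0 ≤ ∑ h : ℋ, 1 / S h :=
    Finset.sum_nonneg fun h _ => div_nonneg zero_le_one (hSpos h).le
  have hdenpos : 0 < D x + (2 : ℝ) ^ (-(k : ℝ)) := by linarith
  have hT : N / (D x + (2 : ℝ) ^ (-(k : ℝ))) ≤ ∑ h : ℋ, 1 / S h := by
    rw [div_le_iff₀ hdenpos]
    nlinarith [mul_le_mul_of_nonneg_right hsumS hTpos]
  constructor
  · have hsum : ∑ h : ℋ, D x / S h = D x * ∑ h : ℋ, 1 / S h := by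
      rw [Finset.mul_sum]
      exact Finset.sum_congr rfl fun h _ => by rw [mul_one_div]
    have hgoal : (∑ h : ℋ, D x / (∑ y ∈ Finset.univ.filter
        (fun y => hash h y = hash h x), D y)) = D x * ∑ h : ℋ, 1 / S h := hsum
    rw [hgoal, div_le_iff₀ hdenpos]
    have h7 : N ≤ (∑ h : ℋ, 1 / S h) * (D x + (2 : ℝ) ^ (-(k : ℝ))) :=
      (div_le_iff₀ hdenpos).mp hT
    have h8 := mul_le_mul_of_nonneg_left (mul_le_mul_of_nonneg_left h7 hxpos.le)
      (le_of_lt (show (0:ℝ) < 1 / N by positivity))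
    have h9 : 1 / N * (D x * N) = D x := by field_simp
    nlinarith [h8, h9]
  · rw [le_div_iff₀ hdenpos]
    nlinarith
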